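/- arXiv:2102.04952 — 8 statements merged into one kernel-verified Lean document; each statement's English description precedes it below -/
import Mathlib

section
/- Let Q1 = [0,1]×[0,1] and Q2 = [1,2]×[0,1] be closed squares in ℝ². Let ℓ_V be the line {(x, s_V·x + c_V) : x ∈ ℝ} with slope 0 < s_V < 1 and ℓ_H the line {(x, s_H·x + c_H) : x ∈ ℝ} with slope s_H < -1. Suppose both ℓ_V and ℓ_H intersect the vertical segment {1}×[0,1]. Then the (unique) intersection point P of ℓ_H and ℓ_V lies in Q1 ∪ Q2. -/
/-- If a line `ℓ_V : y = s_V x + c_V` with `0 < s_V < 1` and a line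
`ℓ_H : y = s_H x + c_H` with `s_H < -1` both intersect the vertical segment
`{1} × [0,1]`, then their unique intersection point lies in
`Q1 ∪ Q2 = ([0,1]×[0,1]) ∪ ([1,2]×[0,1])`. -/
theorem stmt0 (sV cV sH cH : ℝ)
    (hsV0 : 0 < sV) (hsV1 : sV < 1) (hsH : sH < -1)
    (hVside : 0 ≤ sV * 1 + cV ∧ sV * 1 + cV ≤ 1)
    (hHside : 0 ≤ sH * 1 + cH ∧ sH * 1 + cH ≤ 1)
    (x y : ℝ) (honV : y = sV * x + cV) (honH : y = sH * x + cH) :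
    (x, y) ∈ ((Set.Icc (0:ℝ) 1 ×ˢ Set.Icc (0:ℝ) 1) ∪
      (Set.Icc (1:ℝ) 2 ×ˢ Set.Icc (0:ℝ) 1)) := by
  obtain ⟨ha0, ha1⟩ := hVside
  obtain ⟨hb0, hb1⟩ := hHside
  rcases le_total x 1 with hx | hx
  · left
    refine ⟨⟨?_, hx⟩, ?_, ?_⟩
    · nlinarith [mul_nonneg (le_of_lt hsV0) (sub_nonneg.mpr hx)]
    · nlinarith
    · nlinarith
  · right
    refine ⟨⟨hx, ?_⟩, ?_, ?_⟩
    · nlinarith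
    · nlinarith
    · nlinarith
end

section
/- Let Q1 = [0,1]×[0,1] and let S be any one of its four sides, namely {0}×[0,1], {1}×[0,1], [0,1]×{0}, or [0,1]×{1}, and let Q_S be the closed unit square sharing the side S with Q1 (respectively [-1,0]×[0,1], [1,2]×[0,1], [0,1]×[-1,0], [0,1]×[1,2]). Let ℓ_V be a line of slope s_V with 0 < s_V < 1 and ℓ_H a line of slope s_H < -1. If both ℓ_V and ℓ_H intersect the side S, then the unique intersection point of ℓ_H and ℓ_V lies in Q1 ∪ Q_S. -/
set_option maxHeartbeats 1000000 in
/-- Let `Q1 = [0,1]²` and let `S` be any one of its four sides, with `Q_S`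
the closed unit square sharing the side `S` with `Q1`.  If a line `ℓ_V : y = s_V x + c_V`
with `0 < s_V < 1` and a line `ℓ_H : y = s_H x + c_H` with `s_H < -1` both intersect `S`,
then their unique intersection point lies in `Q1 ∪ Q_S`.  The four cases (left, right,
bottom, top side) are stated as a conjunction of four implications. -/
theorem stmt1 (sV cV sH cH : ℝ)
    (hsV0 : 0 < sV) (hsV1 : sV < 1) (hsH : sH < -1)
    (x y : ℝ) (honV : y = sV * x + cV) (honH : y = sH * x + cH) :
    -- left side {0} × [0,1], Q_S = [-1,0] × [0,1]
    (((0 ≤ sV * 0 + cV ∧ sV * 0 + cV ≤ 1) ∧ (0 ≤ sH * 0 + cH ∧ sH * 0 + cH ≤ 1)) →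
      (x, y) ∈ ((Set.Icc (0:ℝ) 1 ×ˢ Set.Icc (0:ℝ) 1) ∪
        (Set.Icc (-1:ℝ) 0 ×ˢ Set.Icc (0:ℝ) 1))) ∧
    -- right side {1} × [0,1], Q_S = [1,2] × [0,1]
    (((0 ≤ sV * 1 + cV ∧ sV * 1 + cV ≤ 1) ∧ (0 ≤ sH * 1 + cH ∧ sH * 1 + cH ≤ 1)) →
      (x, y) ∈ ((Set.Icc (0:ℝ) 1 ×ˢ Set.Icc (0:ℝ) 1) ∪
        (Set.Icc (1:ℝ) 2 ×ˢ Set.Icc (0:ℝ) 1))) ∧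
    -- bottom side [0,1] × {0}, Q_S = [0,1] × [-1,0]
    (((∃ t, 0 ≤ t ∧ t ≤ 1 ∧ sV * t + cV = 0) ∧ (∃ t, 0 ≤ t ∧ t ≤ 1 ∧ sH * t + cH = 0)) →
      (x, y) ∈ ((Set.Icc (0:ℝ) 1 ×ˢ Set.Icc (0:ℝ) 1) ∪
        (Set.Icc (0:ℝ) 1 ×ˢ Set.Icc (-1:ℝ) 0))) ∧
    -- top side [0,1] × {1}, Q_S = [0,1] × [1,2]
    (((∃ t, 0 ≤ t ∧ t ≤ 1 ∧ sV * t + cV = 1) ∧ (∃ t, 0 ≤ t ∧ t ≤ 1 ∧ sH * t + cH = 1)) →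
      (x, y) ∈ ((Set.Icc (0:ℝ) 1 ×ˢ Set.Icc (0:ℝ) 1) ∪
        (Set.Icc (0:ℝ) 1 ×ˢ Set.Icc (1:ℝ) 2))) := by

  have key : x * (sV - sH) = cH - cV := by linear_combination honH - honV
  have hS : (1:ℝ) < sV - sH := by linarith
  refine ⟨?_, ?_, ?_, ?_⟩
  · rintro ⟨⟨hV0, hV1⟩, ⟨hH0, hH1⟩⟩
    simp only [mul_zero, zero_add] at hV0 hV1 hH0 hH1
    rcases le_total 0 x with hx | hx
    · left
      simp only [Set.mem_prod, Set.mem_Icc]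
      refine ⟨⟨hx, ?_⟩, ?_, ?_⟩
      · nlinarith [mul_nonneg hx (by linarith : (0:ℝ) ≤ sV - sH - 1)]
      · nlinarith [mul_nonneg hsV0.le hx]
      · nlinarith [mul_nonneg hx (by linarith : (0:ℝ) ≤ -sH)]
    · right
      simp only [Set.mem_prod, Set.mem_Icc]
      refine ⟨⟨?_, hx⟩, ?_, ?_⟩
      · nlinarith [mul_nonneg (by linarith : (0:ℝ) ≤ -x) (by linarith : (0:ℝ) ≤ sV - sH - 1)]
      · nlinarith [mul_nonneg (by linarith : (0:ℝ) ≤ -x) (by linarith : (0:ℝ) ≤ -sH)]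
      · nlinarith [mul_nonneg hsV0.le (by linarith : (0:ℝ) ≤ -x)]
  · rintro ⟨⟨hV0, hV1⟩, ⟨hH0, hH1⟩⟩
    simp only [mul_one] at hV0 hV1 hH0 hH1
    rcases le_total x 1 with hx | hx
    · left
      simp only [Set.mem_prod, Set.mem_Icc]
      refine ⟨⟨?_, hx⟩, ?_, ?_⟩
      · nlinarith [mul_nonneg (by linarith : (0:ℝ) ≤ 1 - x) (by linarith : (0:ℝ) ≤ sV - sH - 1)]
      · nlinarith [mul_nonneg (by linarith : (0:ℝ) ≤ 1 - x) (by linarith : (0:ℝ) ≤ -sH)]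
      · nlinarith [mul_nonneg hsV0.le (by linarith : (0:ℝ) ≤ 1 - x)]
    · right
      simp only [Set.mem_prod, Set.mem_Icc]
      refine ⟨⟨hx, ?_⟩, ?_, ?_⟩
      · nlinarith [mul_nonneg (by linarith : (0:ℝ) ≤ x - 1) (by linarith : (0:ℝ) ≤ sV - sH - 1)]
      · nlinarith [mul_nonneg hsV0.le (by linarith : (0:ℝ) ≤ x - 1)]
      · nlinarith [mul_nonneg (by linarith : (0:ℝ) ≤ x - 1) (by linarith : (0:ℝ) ≤ -sH)]
  · rintro ⟨⟨tV, htV0, htV1, htV⟩, ⟨tH, htH0, htH1, htH⟩⟩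
    have e1 : y = sV * (x - tV) := by linear_combination honV + htV
    have e2 : y = sH * (x - tH) := by linear_combination honH + htH
    have key2 : y * (sH - sV) = sV * sH * (tH - tV) := by linear_combination sH * e1 - sV * e2
    rcases le_total 0 y with hy | hy
    · left
      simp only [Set.mem_prod, Set.mem_Icc]
      have hx1 : tV ≤ x := by
        by_contra hc; push_neg at hc
        nlinarith [e1, mul_pos hsV0 (show (0:ℝ) < tV - x by linarith)]
      have hx2 : x ≤ tH := by
        by_contra hc; push_neg at hc
        nlinarith [e2, mul_pos (show (0:ℝ) < -sH by linarith) (show (0:ℝ) < x - tH by linarith)]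
      refine ⟨⟨by linarith, by linarith⟩, hy, ?_⟩
      nlinarith [mul_nonneg (by linarith : (0:ℝ) ≤ 1 - tH + tV) (by nlinarith [mul_pos hsV0 (show (0:ℝ) < -sH by linarith)] : (0:ℝ) ≤ -sV * sH),
        mul_nonneg (by linarith : (0:ℝ) ≤ 1 - sV) (by linarith : (0:ℝ) ≤ -sH - 1)]
    · right
      simp only [Set.mem_prod, Set.mem_Icc]
      have hx1 : x ≤ tV := by
        by_contra hc; push_neg at hc
        nlinarith [e1, mul_pos hsV0 (show (0:ℝ) < x - tV by linarith)]
      have hx2 : tH ≤ x := by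
        by_contra hc; push_neg at hc
        nlinarith [e2, mul_pos (show (0:ℝ) < -sH by linarith) (show (0:ℝ) < tH - x by linarith)]
      refine ⟨⟨by linarith, by linarith⟩, ?_, hy⟩
      have hP : -(sV * sH) ≤ sV - sH - 1 := by nlinarith
      have h3 : (-y) * (sV - sH) ≤ -(sV * sH) := by
        nlinarith [key2, mul_nonneg (show (0:ℝ) ≤ 1 - tV + tH by linarith)
          (show (0:ℝ) ≤ -(sV * sH) by nlinarith [mul_pos hsV0 (show (0:ℝ) < -sH by linarith)])]
      by_contra h
      push_neg at h
      nlinarith [h3, hP, mul_pos (show (0:ℝ) < -y - 1 by linarith) (show (0:ℝ) < sV - sH by linarith)]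
  · rintro ⟨⟨tV, htV0, htV1, htV⟩, ⟨tH, htH0, htH1, htH⟩⟩
    have e1 : y - 1 = sV * (x - tV) := by linear_combination honV + htV
    have e2 : y - 1 = sH * (x - tH) := by linear_combination honH + htH
    have key2 : (y - 1) * (sH - sV) = sV * sH * (tH - tV) := by linear_combination sH * e1 - sV * e2
    rcases le_total y 1 with hy | hy
    · left
      simp only [Set.mem_prod, Set.mem_Icc]
      have hx1 : x ≤ tV := by
        by_contra hc; push_neg at hc
        nlinarith [e1, mul_pos hsV0 (show (0:ℝ) < x - tV by linarith)]
      have hx2 : tH ≤ x := by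
        by_contra hc; push_neg at hc
        nlinarith [e2, mul_pos (show (0:ℝ) < -sH by linarith) (show (0:ℝ) < tH - x by linarith)]
      refine ⟨⟨by linarith, by linarith⟩, ?_, hy⟩
      have hP : -(sV * sH) ≤ sV - sH - 1 := by nlinarith
      have h3 : (1 - y) * (sV - sH) ≤ -(sV * sH) := by
        nlinarith [key2, mul_nonneg (show (0:ℝ) ≤ 1 - tV + tH by linarith)
          (show (0:ℝ) ≤ -(sV * sH) by nlinarith [mul_pos hsV0 (show (0:ℝ) < -sH by linarith)])]
      by_contra h
      push_neg at h
      nlinarith [h3, hP, mul_pos (show (0:ℝ) < -y by linarith) (show (0:ℝ) < sV - sH by linarith)]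
    · right
      simp only [Set.mem_prod, Set.mem_Icc]
      have hx1 : tV ≤ x := by
        by_contra hc; push_neg at hc
        nlinarith [e1, mul_pos hsV0 (show (0:ℝ) < tV - x by linarith)]
      have hx2 : x ≤ tH := by
        by_contra hc; push_neg at hc
        nlinarith [e2, mul_pos (show (0:ℝ) < -sH by linarith) (show (0:ℝ) < x - tH by linarith)]
      refine ⟨⟨by linarith, by linarith⟩, hy, ?_⟩
      have hP : -(sV * sH) ≤ sV - sH - 1 := by nlinarith
      have h3 : (y - 1) * (sV - sH) ≤ -(sV * sH) := by
        nlinarith [key2, mul_nonneg (show (0:ℝ) ≤ 1 - tH + tV by linarith)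
          (show (0:ℝ) ≤ -(sV * sH) by nlinarith [mul_pos hsV0 (show (0:ℝ) < -sH by linarith)])]
      by_contra h
      push_neg at h
      nlinarith [h3, hP, mul_pos (show (0:ℝ) < y - 2 by linarith) (show (0:ℝ) < sV - sH by linarith)]
end

section
/- Let A be the 12-letter alphabet {A_i, B_i, C_i, D_i : i ∈ ℤ/3ℤ}. Let n ≥ 6 and let γ_1, …, γ_n be a word in A such that for every k with 1 ≤ k ≤ n-1 and every i ∈ ℤ/3ℤ: if γ_k = C_i then γ_{k+1} = A_{i+1}; if γ_k = B_i then γ_{k+1} ∈ {C_{i-1}, D_{i-1}}; if γ_k = A_i then γ_{k+1} ∈ {A_{i+1}, B_{i+1}, C_{i+1}}; and if γ_k = D_i then γ_{k+1} ∈ {A_{i-1}, B_{i-1}}. Then for every i ∈ ℤ/3ℤ there exists k with 1 ≤ k ≤ n-1 such that γ_k ∈ {A_{i-1}, A_i, B_i, B_{i+1}, C_{i-1}, C_i, D_i, D_{i+1}}. -/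
/-- The twelve-letter alphabet `{A_i, B_i, C_i, D_i : i ∈ ℤ/3ℤ}` labelling the
saddle connections of the Ornithorynque origami. -/
inductive OLetter : Type
  | A : ZMod 3 → OLetter
  | B : ZMod 3 → OLetter
  | C : ZMod 3 → OLetter
  | D : ZMod 3 → OLetter

/-- if a word `γ_1, …, γ_n` with `n ≥ 6` satisfies the transition
constraints of cutting sequences of segments of slope in `(0,1)`, then for every
`i ∈ ℤ/3ℤ` some letter `γ_k` with `1 ≤ k ≤ n-1` belongs to the set of boundary
letters `{A_{i-1}, A_i, B_i, B_{i+1}, C_{i-1}, C_i, D_i, D_{i+1}}` of the `i`-th tile. -/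
theorem stmt2 (n : ℕ) (hn : 6 ≤ n) (γ : ℕ → OLetter)
    (hC : ∀ k, 1 ≤ k → k ≤ n - 1 → ∀ i : ZMod 3,
      γ k = OLetter.C i → γ (k + 1) = OLetter.A (i + 1))
    (hB : ∀ k, 1 ≤ k → k ≤ n - 1 → ∀ i : ZMod 3,
      γ k = OLetter.B i → (γ (k + 1) = OLetter.C (i - 1) ∨ γ (k + 1) = OLetter.D (i - 1)))
    (hA : ∀ k, 1 ≤ k → k ≤ n - 1 → ∀ i : ZMod 3,
      γ k = OLetter.A i → (γ (k + 1) = OLetter.A (i + 1) ∨ γ (k + 1) = OLetter.B (i + 1) ∨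
        γ (k + 1) = OLetter.C (i + 1)))
    (hD : ∀ k, 1 ≤ k → k ≤ n - 1 → ∀ i : ZMod 3,
      γ k = OLetter.D i → (γ (k + 1) = OLetter.A (i - 1) ∨ γ (k + 1) = OLetter.B (i - 1))) :
    ∀ i : ZMod 3, ∃ k, 1 ≤ k ∧ k ≤ n - 1 ∧
      (γ k = OLetter.A (i - 1) ∨ γ k = OLetter.A i ∨
       γ k = OLetter.B i ∨ γ k = OLetter.B (i + 1) ∨
       γ k = OLetter.C (i - 1) ∨ γ k = OLetter.C i ∨
       γ k = OLetter.D i ∨ γ k = OLetter.D (i + 1)) := by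
  intro i
  by_contra hcon
  push_neg at hcon
  -- arithmetic facts in ZMod 3
  have e1 : i + 1 + 1 = i - 1 := by
    have : ∀ j : ZMod 3, j + 1 + 1 = j - 1 := by decide
    exact this i
  have e2 : i - 1 - 1 = i + 1 := by
    have : ∀ j : ZMod 3, j - 1 - 1 = j + 1 := by decide
    exact this i
  have hb : ∀ k : ℕ, k ≤ 5 → k ≤ n - 1 := by intro k h; omega
  -- classification: non-boundary letters are A(i+1), B(i-1), C(i+1), D(i-1)
  have classify : ∀ k, 1 ≤ k → k ≤ n - 1 →
      γ k = OLetter.A (i + 1) ∨ γ k = OLetter.B (i - 1) ∨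
      γ k = OLetter.C (i + 1) ∨ γ k = OLetter.D (i - 1) := by
    intro k h1 h2
    have h := hcon k h1 h2
    cases hx : γ k with
    | A j =>
      have hj1 : j ≠ i - 1 := fun he => h.1 (by rw [hx, he])
      have hj2 : j ≠ i := fun he => h.2.1 (by rw [hx, he])
      have key : ∀ j i : ZMod 3, j ≠ i - 1 → j ≠ i → j = i + 1 := by decide
      exact Or.inl (by rw [key j i hj1 hj2])
    | B j =>
      have hj1 : j ≠ i := fun he => h.2.2.1 (by rw [hx, he])
      have hj2 : j ≠ i + 1 := fun he => h.2.2.2.1 (by rw [hx, he])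
      have key : ∀ j i : ZMod 3, j ≠ i → j ≠ i + 1 → j = i - 1 := by decide
      exact Or.inr (Or.inl (by rw [key j i hj1 hj2]))
    | C j =>
      have hj1 : j ≠ i - 1 := fun he => h.2.2.2.2.1 (by rw [hx, he])
      have hj2 : j ≠ i := fun he => h.2.2.2.2.2.1 (by rw [hx, he])
      have key : ∀ j i : ZMod 3, j ≠ i - 1 → j ≠ i → j = i + 1 := by decide
      exact Or.inr (Or.inr (Or.inl (by rw [key j i hj1 hj2])))
    | D j =>
      have hj1 : j ≠ i := fun he => h.2.2.2.2.2.2.1 (by rw [hx, he])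
      have hj2 : j ≠ i + 1 := fun he => h.2.2.2.2.2.2.2 (by rw [hx, he])
      have key : ∀ j i : ZMod 3, j ≠ i → j ≠ i + 1 → j = i - 1 := by decide
      exact Or.inr (Or.inr (Or.inr (by rw [key j i hj1 hj2])))
  -- step lemmas
  have stepA : ∀ k, 1 ≤ k → k + 1 ≤ n - 1 → γ k = OLetter.A (i + 1) →
      γ (k + 1) = OLetter.B (i - 1) := by
    intro k h1 h2 hk
    have ht := hA k h1 (by omega) (i + 1) hk
    rw [e1] at ht
    have hnb := hcon (k + 1) (by omega) h2
    rcases ht with h | h | h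
    · exact absurd h hnb.1
    · exact h
    · exact absurd h hnb.2.2.2.2.1
  have stepB : ∀ k, 1 ≤ k → k + 1 ≤ n - 1 → γ k = OLetter.B (i - 1) →
      γ (k + 1) = OLetter.C (i + 1) := by
    intro k h1 h2 hk
    have ht := hB k h1 (by omega) (i - 1) hk
    rw [e2] at ht
    have hnb := hcon (k + 1) (by omega) h2
    rcases ht with h | h
    · exact h
    · exact absurd h hnb.2.2.2.2.2.2.2
  have stepC : ∀ k, 1 ≤ k → k + 1 ≤ n - 1 → γ k = OLetter.C (i + 1) → False := by
    intro k h1 h2 hk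
    have ht := hC k h1 (by omega) (i + 1) hk
    rw [e1] at ht
    have hnb := hcon (k + 1) (by omega) h2
    exact absurd ht hnb.1
  have stepD : ∀ k, 1 ≤ k → k + 1 ≤ n - 1 → γ k = OLetter.D (i - 1) →
      γ (k + 1) = OLetter.A (i + 1) := by
    intro k h1 h2 hk
    have ht := hD k h1 (by omega) (i - 1) hk
    rw [e2] at ht
    have hnb := hcon (k + 1) (by omega) h2
    rcases ht with h | h
    · exact h
    · exact absurd h hnb.2.2.2.1
  -- chain the steps: D → A → B → C → dead, so 5 non-boundary letters are impossible
  rcases classify 1 le_rfl (hb 1 (by norm_num)) with h1 | h1 | h1 | h1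
  · have h2 := stepA 1 le_rfl (hb 2 (by norm_num)) h1
    have h3 := stepB 2 (by norm_num) (hb 3 (by norm_num)) h2
    exact stepC 3 (by norm_num) (hb 4 (by norm_num)) h3
  · have h2 := stepB 1 le_rfl (hb 2 (by norm_num)) h1
    exact stepC 2 (by norm_num) (hb 3 (by norm_num)) h2
  · exact stepC 1 le_rfl (hb 2 (by norm_num)) h1
  · have h2 := stepD 1 le_rfl (hb 2 (by norm_num)) h1
    have h3 := stepA 2 (by norm_num) (hb 3 (by norm_num)) h2
    have h4 := stepB 3 (by norm_num) (hb 4 (by norm_num)) h3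
    exact stepC 4 (by norm_num) (hb 5 (by norm_num)) h4
end

section
/- Let Q = (ℤ/3ℤ)×(ℤ/2ℤ)×(ℤ/2ℤ) and let h, v be the permutations of Q defined by h(i,0,0)=(i+1,1,0), h(i,0,1)=(i-1,1,1), h(i,1,0)=(i,0,0), h(i,1,1)=(i,0,1) and v(i,0,0)=(i-1,0,1), v(i,0,1)=(i,0,0), v(i,1,0)=(i+1,1,1), v(i,1,1)=(i,1,0), for all i ∈ ℤ/3ℤ. Then there exists a permutation σ of Q such that σ∘h∘σ⁻¹ = h and σ∘(v∘h⁻¹)∘σ⁻¹ = v. -/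
abbrev QO := ZMod 3 × ZMod 2 × ZMod 2

def Hp : Equiv.Perm QO where
  toFun p := if p.2.1 = 0 then (if p.2.2 = 0 then (p.1 + 1, 1, 0) else (p.1 - 1, 1, 1))
    else (p.1, 0, p.2.2)
  invFun p := if p.2.1 = 0 then (p.1, 1, p.2.2)
    else (if p.2.2 = 0 then (p.1 - 1, 0, 0) else (p.1 + 1, 0, 1))
  left_inv := by decide
  right_inv := by decide

def Vp : Equiv.Perm QO where
  toFun p := if p.2.1 = 0 then (if p.2.2 = 0 then (p.1 - 1, 0, 1) else (p.1, 0, 0))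
    else (if p.2.2 = 0 then (p.1 + 1, 1, 1) else (p.1, 1, 0))
  invFun p := if p.2.1 = 0 then (if p.2.2 = 0 then (p.1, 0, 1) else (p.1 + 1, 0, 0))
    else (if p.2.2 = 0 then (p.1, 1, 1) else (p.1 - 1, 1, 0))
  left_inv := by decide
  right_inv := by decide

def Sp : Equiv.Perm QO where
  toFun p := (p.1 + ((p.2.1.val * p.2.2.val : ℕ) : ZMod 3), p.2.1 + p.2.2, p.2.2)
  invFun p := (p.1 - (((p.2.1 + p.2.2).val * p.2.2.val : ℕ) : ZMod 3), p.2.1 + p.2.2, p.2.2)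
  left_inv := by decide
  right_inv := by decide

/-- for the permutations `(h, v)` defining the Ornithorynque origami, there is a
permutation `σ` with `σ h σ⁻¹ = h` and `σ (v h⁻¹) σ⁻¹ = v`; i.e. `T · X_O = X_O` for
`T = [[1,1],[0,1]]`. -/
theorem stmt3 (h v : Equiv.Perm (ZMod 3 × ZMod 2 × ZMod 2))
    (hh : ∀ i : ZMod 3, h (i, 0, 0) = (i + 1, 1, 0) ∧ h (i, 0, 1) = (i - 1, 1, 1) ∧
      h (i, 1, 0) = (i, 0, 0) ∧ h (i, 1, 1) = (i, 0, 1))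
    (hv : ∀ i : ZMod 3, v (i, 0, 0) = (i - 1, 0, 1) ∧ v (i, 0, 1) = (i, 0, 0) ∧
      v (i, 1, 0) = (i + 1, 1, 1) ∧ v (i, 1, 1) = (i, 1, 0)) :
    ∃ σ : Equiv.Perm (ZMod 3 × ZMod 2 × ZMod 2),
      σ * h * σ⁻¹ = h ∧ σ * (v * h⁻¹) * σ⁻¹ = v := by
  have hH : h = Hp := by
    refine Equiv.ext fun x => ?_
    obtain ⟨i, a, b⟩ := x
    fin_cases a <;> fin_cases b
    · show h (i, 0, 0) = Hp (i, 0, 0); rw [(hh i).1]; simp [Hp]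
    · show h (i, 0, 1) = Hp (i, 0, 1); rw [(hh i).2.1]; simp [Hp]
    · show h (i, 1, 0) = Hp (i, 1, 0); rw [(hh i).2.2.1]; simp [Hp]
    · show h (i, 1, 1) = Hp (i, 1, 1); rw [(hh i).2.2.2]; simp [Hp]
  have hV : v = Vp := by
    refine Equiv.ext fun x => ?_
    obtain ⟨i, a, b⟩ := x
    fin_cases a <;> fin_cases b
    · show v (i, 0, 0) = Vp (i, 0, 0); rw [(hv i).1]; simp [Vp]
    · show v (i, 0, 1) = Vp (i, 0, 1); rw [(hv i).2.1]; simp [Vp]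
    · show v (i, 1, 0) = Vp (i, 1, 0); rw [(hv i).2.2.1]; simp [Vp]
    · show v (i, 1, 1) = Vp (i, 1, 1); rw [(hv i).2.2.2]; simp [Vp]
  subst hH hV
  exact ⟨Sp, by decide, by decide⟩
end

section
/- Let Q = (ℤ/3ℤ)×(ℤ/2ℤ)×(ℤ/2ℤ) and let h, v be the permutations of Q defined by h(i,0,0)=(i+1,1,0), h(i,0,1)=(i-1,1,1), h(i,1,0)=(i,0,0), h(i,1,1)=(i,0,1) and v(i,0,0)=(i-1,0,1), v(i,0,1)=(i,0,0), v(i,1,0)=(i+1,1,1), v(i,1,1)=(i,1,0), for all i ∈ ℤ/3ℤ. Then there exists a permutation σ of Q such that σ∘(h∘v⁻¹)∘σ⁻¹ = h and σ∘v∘σ⁻¹ = v. -/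
private def sf (x : ZMod 3 × ZMod 2 × ZMod 2) : ZMod 3 × ZMod 2 × ZMod 2 :=
  if x.2 = (1, 0) then (x.1, 1, 1) else if x.2 = (1, 1) then (x.1 - 1, 1, 0) else x

private def sg (x : ZMod 3 × ZMod 2 × ZMod 2) : ZMod 3 × ZMod 2 × ZMod 2 :=
  if x.2 = (1, 1) then (x.1, 1, 0) else if x.2 = (1, 0) then (x.1 + 1, 1, 1) else x

private def sig : Equiv.Perm (ZMod 3 × ZMod 2 × ZMod 2) :=
  ⟨sf, sg, by decide, by decide⟩

private lemma sig00 : ∀ i : ZMod 3, sig (i, 0, 0) = (i, 0, 0) := by decide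
private lemma sig01 : ∀ i : ZMod 3, sig (i, 0, 1) = (i, 0, 1) := by decide
private lemma sig10 : ∀ i : ZMod 3, sig (i, 1, 0) = (i, 1, 1) := by decide
private lemma sig11 : ∀ i : ZMod 3, sig (i, 1, 1) = (i - 1, 1, 0) := by decide

private lemma two_cases : ∀ a : ZMod 2, a = 0 ∨ a = 1 := by decide
private lemma z3a : ∀ j : ZMod 3, j - 1 - 1 = j + 1 := by decide
private lemma z3b : ∀ j : ZMod 3, j + 1 + 1 = j - 1 := by decide
private lemma z3c : ∀ j : ZMod 3, j + 1 - 1 = j := by decide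
private lemma z3d : ∀ j : ZMod 3, j - 1 + 1 = j := by decide

/-- for the permutations `(h, v)` defining the Ornithorynque origami, there is a
permutation `σ` with `σ (h v⁻¹) σ⁻¹ = h` and `σ v σ⁻¹ = v`; i.e. `V · X_O = X_O` for
`V = [[1,0],[1,1]]`. -/
theorem stmt4 (h v : Equiv.Perm (ZMod 3 × ZMod 2 × ZMod 2))
    (hh : ∀ i : ZMod 3, h (i, 0, 0) = (i + 1, 1, 0) ∧ h (i, 0, 1) = (i - 1, 1, 1) ∧
      h (i, 1, 0) = (i, 0, 0) ∧ h (i, 1, 1) = (i, 0, 1))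
    (hv : ∀ i : ZMod 3, v (i, 0, 0) = (i - 1, 0, 1) ∧ v (i, 0, 1) = (i, 0, 0) ∧
      v (i, 1, 0) = (i + 1, 1, 1) ∧ v (i, 1, 1) = (i, 1, 0)) :
    ∃ σ : Equiv.Perm (ZMod 3 × ZMod 2 × ZMod 2),
      σ * (h * v⁻¹) * σ⁻¹ = h ∧ σ * v * σ⁻¹ = v := by
  refine ⟨sig, ?_, ?_⟩
  · rw [mul_inv_eq_iff_eq_mul, ← mul_assoc, mul_inv_eq_iff_eq_mul]
    refine Equiv.ext ?_
    rintro ⟨i, a, b⟩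
    rcases two_cases a with rfl | rfl <;> rcases two_cases b with rfl | rfl <;>
      simp only [Equiv.Perm.mul_apply]
    · rw [(hh i).1, sig10, (hv i).1, sig01, (hh (i - 1)).2.1, z3a]
    · rw [(hh i).2.1, sig11, (hv i).2.1, sig00, (hh i).1, z3a]
    · rw [(hh i).2.2.1, sig00, (hv i).2.2.1, sig11, z3c, (hh i).2.2.1]
    · rw [(hh i).2.2.2, sig01, (hv i).2.2.2, sig10, (hh i).2.2.2]
  · rw [mul_inv_eq_iff_eq_mul]
    refine Equiv.ext ?_
    rintro ⟨i, a, b⟩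
    rcases two_cases a with rfl | rfl <;> rcases two_cases b with rfl | rfl <;>
      simp only [Equiv.Perm.mul_apply]
    · rw [(hv i).1, sig01, sig00, (hv i).1]
    · rw [(hv i).2.1, sig00, sig01, (hv i).2.1]
    · rw [(hv i).2.2.1, sig11, sig10, (hv i).2.2.2, z3c]
    · rw [(hv i).2.2.2, sig10, sig11, (hv (i - 1)).2.2.1, z3d]
end

section
/- Let Q = (ℤ/3ℤ)×(ℤ/2ℤ)×(ℤ/2ℤ) and let h, v be the permutations of Q defined by h(i,0,0)=(i+1,1,0), h(i,0,1)=(i-1,1,1), h(i,1,0)=(i,0,0), h(i,1,1)=(i,0,1) and v(i,0,0)=(i-1,0,1), v(i,0,1)=(i,0,0), v(i,1,0)=(i+1,1,1), v(i,1,1)=(i,1,0), for all i ∈ ℤ/3ℤ. Then the commutator [v,h] := v⁻¹∘h⁻¹∘v∘h is a product of exactly three disjoint cycles, each of length 3 (i.e., its cycle type is the multiset {3,3,3}). -/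
open Equiv Equiv.Perm

private abbrev QQ := ZMod 3 × ZMod 2 × ZMod 2

private def l1 : List QQ := [(0,0,0),(1,0,0),(2,0,0)]
private def l2 : List QQ := [(0,0,1),(1,0,1),(2,0,1)]
private def l3 : List QQ := [(0,1,0),(1,1,0),(2,1,0)]

private def c1 : Equiv.Perm QQ := l1.formPerm
private def c2 : Equiv.Perm QQ := l2.formPerm
private def c3 : Equiv.Perm QQ := l3.formPerm
private def c0 : Equiv.Perm QQ := c1 * c2 * c3

private lemma hc0 : ∀ i : ZMod 3, c0 (i,0,0) = (i+1,0,0) ∧ c0 (i,0,1) = (i+1,0,1) ∧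
    c0 (i,1,0) = (i+1,1,0) ∧ c0 (i,1,1) = (i,1,1) := by decide

private lemma hd12 : c1.Disjoint c2 := (by decide : ∀ x : QQ, c1 x = x ∨ c2 x = x)
private lemma hd13 : c1.Disjoint c3 := (by decide : ∀ x : QQ, c1 x = x ∨ c3 x = x)
private lemma hd23 : c2.Disjoint c3 := (by decide : ∀ x : QQ, c2 x = x ∨ c3 x = x)

private lemma cycleType_c0 : c0.cycleType = {3,3,3} := by
  have n1 : l1.Nodup := by decide
  have n2 : l2.Nodup := by decide
  have n3 : l3.Nodup := by decide
  have i1 : c1.IsCycle := List.isCycle_formPerm n1 (by decide)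
  have i2 : c2.IsCycle := List.isCycle_formPerm n2 (by decide)
  have i3 : c3.IsCycle := List.isCycle_formPerm n3 (by decide)
  have s1 : c1.support = l1.toFinset := List.support_formPerm_of_nodup _ n1 (by decide)
  have s2 : c2.support = l2.toFinset := List.support_formPerm_of_nodup _ n2 (by decide)
  have s3 : c3.support = l3.toFinset := List.support_formPerm_of_nodup _ n3 (by decide)
  rw [c0, (Disjoint.mul_left hd13 hd23).cycleType_mul, hd12.cycleType_mul,
    i1.cycleType, i2.cycleType, i3.cycleType, s1, s2, s3]
  decide

/-- the commutator `[v,h] = v⁻¹ ∘ h⁻¹ ∘ v ∘ h` of the permutations defining the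
Ornithorynque origami is a product of exactly three disjoint 3-cycles, i.e. its cycle type
is the multiset `{3, 3, 3}`. -/
theorem stmt5 (h v : Equiv.Perm (ZMod 3 × ZMod 2 × ZMod 2))
    (hh : ∀ i : ZMod 3, h (i, 0, 0) = (i + 1, 1, 0) ∧ h (i, 0, 1) = (i - 1, 1, 1) ∧
      h (i, 1, 0) = (i, 0, 0) ∧ h (i, 1, 1) = (i, 0, 1))
    (hv : ∀ i : ZMod 3, v (i, 0, 0) = (i - 1, 0, 1) ∧ v (i, 0, 1) = (i, 0, 0) ∧
      v (i, 1, 0) = (i + 1, 1, 1) ∧ v (i, 1, 1) = (i, 1, 0)) :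
    (v⁻¹ * h⁻¹ * v * h).cycleType = {3, 3, 3} := by
  have key : v * h = h * v * c0 := by
    apply Equiv.ext; intro q
    obtain ⟨i, a, b⟩ := q
    have h3 : (3 : ZMod 3) = 0 := by decide
    have hab : (a = 0 ∨ a = 1) ∧ (b = 0 ∨ b = 1) := by revert a b; decide
    obtain ⟨(rfl|rfl), (rfl|rfl)⟩ := hab
    · simp only [Equiv.Perm.mul_apply]
      rw [(hc0 i).1, (hh i).1, (hv (i+1)).2.2.1, (hv (i+1)).1,
        show i+1-1 = i from by ring, (hh i).2.1]
      refine Prod.ext ?_ rfl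
      linear_combination h3
    · simp only [Equiv.Perm.mul_apply]
      rw [(hc0 i).2.1, (hh i).2.1, (hv (i-1)).2.2.2, (hv (i+1)).2.1, (hh (i+1)).1]
      refine Prod.ext ?_ rfl
      linear_combination -h3
    · simp only [Equiv.Perm.mul_apply]
      rw [(hc0 i).2.2.1, (hh i).2.2.1, (hv i).1, (hv (i+1)).2.2.1, (hh (i+1+1)).2.2.2]
      refine Prod.ext ?_ rfl
      linear_combination -h3
    · simp only [Equiv.Perm.mul_apply]
      rw [(hc0 i).2.2.2, (hh i).2.2.2, (hv i).2.1, (hv i).2.2.2, (hh i).2.2.1]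
  have : v⁻¹ * h⁻¹ * v * h = c0 := by
    rw [mul_assoc, mul_assoc, key]; group
  rw [this]; exact cycleType_c0
end

section
/- Let Q = (ℤ/3ℤ)×(ℤ/2ℤ)×(ℤ/2ℤ) and let h, v be the permutations of Q defined by h(i,0,0)=(i+1,1,0), h(i,0,1)=(i-1,1,1), h(i,1,0)=(i,0,0), h(i,1,1)=(i,0,1) and v(i,0,0)=(i-1,0,1), v(i,0,1)=(i,0,0), v(i,1,0)=(i+1,1,1), v(i,1,1)=(i,1,0), for all i ∈ ℤ/3ℤ. Then the set of permutations σ of Q satisfying σ∘h = h∘σ and σ∘v = v∘σ is a subgroup of the symmetric group on Q of order exactly 3 (hence isomorphic to ℤ/3ℤ). -/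
/-- the set of permutations `σ` of `Q = (ℤ/3ℤ) × (ℤ/2ℤ) × (ℤ/2ℤ)` commuting with
both permutations `(h, v)` defining the Ornithorynque origami (i.e. the automorphism group
`Aut(X_O)`) has exactly 3 elements. -/
theorem stmt7 (h v : Equiv.Perm (ZMod 3 × ZMod 2 × ZMod 2))
    (hh : ∀ i : ZMod 3, h (i, 0, 0) = (i + 1, 1, 0) ∧ h (i, 0, 1) = (i - 1, 1, 1) ∧
      h (i, 1, 0) = (i, 0, 0) ∧ h (i, 1, 1) = (i, 0, 1))
    (hv : ∀ i : ZMod 3, v (i, 0, 0) = (i - 1, 0, 1) ∧ v (i, 0, 1) = (i, 0, 0) ∧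
      v (i, 1, 0) = (i + 1, 1, 1) ∧ v (i, 1, 1) = (i, 1, 0)) :
    Set.ncard {σ : Equiv.Perm (ZMod 3 × ZMod 2 × ZMod 2) |
      σ * h = h * σ ∧ σ * v = v * σ} = 3 := by
  have two : ∀ x : ZMod 2, x = 0 ∨ x = 1 := by decide
  have h00 : ∀ i : ZMod 3, h (i,0,0) = (i+1,1,0) := fun i => (hh i).1
  have h01 : ∀ i : ZMod 3, h (i,0,1) = (i-1,1,1) := fun i => (hh i).2.1
  have h10 : ∀ i : ZMod 3, h (i,1,0) = (i,0,0) := fun i => (hh i).2.2.1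
  have h11 : ∀ i : ZMod 3, h (i,1,1) = (i,0,1) := fun i => (hh i).2.2.2
  have v00 : ∀ i : ZMod 3, v (i,0,0) = (i-1,0,1) := fun i => (hv i).1
  have v01 : ∀ i : ZMod 3, v (i,0,1) = (i,0,0) := fun i => (hv i).2.1
  have v10 : ∀ i : ZMod 3, v (i,1,0) = (i+1,1,1) := fun i => (hv i).2.2.1
  have v11 : ∀ i : ZMod 3, v (i,1,1) = (i,1,0) := fun i => (hv i).2.2.2
  set T : ZMod 3 → Equiv.Perm (ZMod 3 × ZMod 2 × ZMod 2) :=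
    fun a => (Equiv.addLeft a).prodCongr (Equiv.refl _) with hT
  have Tapp : ∀ a i (j k : ZMod 2), T a (i, j, k) = (a + i, j, k) := fun a i j k => rfl
  have Tinj : Function.Injective T := by
    intro x y hxy
    have := congrArg (fun f : Equiv.Perm (ZMod 3 × ZMod 2 × ZMod 2) =>
      (f ((0:ZMod 3),(0:ZMod 2),(0:ZMod 2))).1) hxy
    simpa [Tapp] using this
  have hset : {σ : Equiv.Perm (ZMod 3 × ZMod 2 × ZMod 2) |
      σ * h = h * σ ∧ σ * v = v * σ} = Set.range T := by
    ext σ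
    constructor
    · rintro ⟨c1, c2⟩
      have sh : ∀ x, σ (h x) = h (σ x) := fun x => Equiv.ext_iff.mp c1 x
      have sv : ∀ x, σ (v x) = v (σ x) := fun x => Equiv.ext_iff.mp c2 x
      obtain ⟨a, b, c, hp⟩ : ∃ a b c, σ (0,0,0) = (a,b,c) := ⟨_, _, _, rfl⟩
      -- the word w = h ∘ v ∘ v ∘ v ∘ h ∘ v ∘ h ∘ h fixes exactly the points (·,0,0)
      have sw : ∀ x, σ (h (v (v (v (h (v (h (h x)))))))) =
          h (v (v (v (h (v (h (h (σ x)))))))) := fun x => by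
        rw [sh, sv, sv, sv, sh, sv, sh, sh]
      have w0 : h (v (v (v (h (v (h (h ((0:ZMod 3),(0:ZMod 2),(0:ZMod 2))))))))) = (0,0,0) := by
        rw [h00, h10, v00, h01, v11, v10, v11, h10]
        norm_num
      have key := sw (0,0,0)
      rw [w0, hp] at key
      -- key : (a,b,c) = w (a,b,c); rule out (b,c) ≠ (0,0)
      have hbc : b = 0 ∧ c = 0 := by
        rcases two b with rfl | rfl <;> rcases two c with rfl | rfl
        · exact ⟨rfl, rfl⟩
        · exfalso
          rw [h01, h11, v01, h00, v10, v11, v10, h11] at key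
          have k1 : a = a-1+1+1+1 := congrArg Prod.fst key
          have k2 : (2:ZMod 3) = 0 := by linear_combination -k1
          exact absurd k2 (by decide)
        · exfalso
          rw [h10, h00, v10, h11, v01, v00, v01, h00] at key
          have k1 : a = a+1+1-1+1 := congrArg Prod.fst key
          have k2 : (2:ZMod 3) = 0 := by linear_combination -k1
          exact absurd k2 (by decide)
        · exfalso
          rw [h11, h01, v11, h10, v00, v01, v00, h01] at key
          have k1 : a = a-1-1-1-1 := congrArg Prod.fst key
          have k2 : (4:ZMod 3) = 0 := by linear_combination k1
          exact absurd k2 (by decide)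
      obtain ⟨rfl, rfl⟩ := hbc
      -- now σ(0,0,0) = (a,0,0); propagate
      have step : ∀ i : ZMod 3, σ (i,0,0) = (a+i,0,0) → σ (i+1,0,0) = (a+(i+1),0,0) := by
        intro i hi
        have t1 := sh (i,0,0)
        rw [h00 i, hi, h00 (a+i)] at t1
        have t2 := sh (i+1,1,0)
        rw [h10, t1, h10] at t2
        rw [t2, add_assoc]
      have three : ∀ x : ZMod 3, x = 0 ∨ x = 0+1 ∨ x = 0+1+1 := by decide
      have c0 : σ ((0:ZMod 3),0,0) = (a+0,0,0) := by rw [add_zero]; exact hp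
      have c00 : ∀ i : ZMod 3, σ (i,0,0) = (a+i,0,0) := by
        intro i
        rcases three i with rfl | rfl | rfl
        · exact c0
        · exact step 0 c0
        · exact step (0+1) (step 0 c0)
      have c10 : ∀ i : ZMod 3, σ (i,1,0) = (a+i,1,0) := by
        intro i
        have t1 := sh (i-1,0,0)
        rw [h00 (i-1), c00 (i-1), h00 (a+(i-1))] at t1
        rwa [show i-1+1 = i from by ring, show a+(i-1)+1 = a+i from by ring] at t1
      have c01 : ∀ i : ZMod 3, σ (i,0,1) = (a+i,0,1) := by
        intro i
        have t1 := sv (i+1,0,0)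
        rw [v00 (i+1), c00 (i+1), v00 (a+(i+1))] at t1
        rwa [show i+1-1 = i from by ring, show a+(i+1)-1 = a+i from by ring] at t1
      have c11 : ∀ i : ZMod 3, σ (i,1,1) = (a+i,1,1) := by
        intro i
        have t1 := sh (i+1,0,1)
        rw [h01 (i+1), c01 (i+1), h01 (a+(i+1))] at t1
        rwa [show i+1-1 = i from by ring, show a+(i+1)-1 = a+i from by ring] at t1
      refine ⟨a, Equiv.ext fun x => ?_⟩
      obtain ⟨i, j, k⟩ := x
      rcases two j with rfl | rfl <;> rcases two k with rfl | rfl <;>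
        rw [Tapp] <;> [rw [c00]; rw [c01]; rw [c10]; rw [c11]]
    · rintro ⟨a, rfl⟩
      constructor
      · refine Equiv.ext fun x => ?_
        obtain ⟨i, j, k⟩ := x
        rw [Equiv.Perm.mul_apply, Equiv.Perm.mul_apply]
        rcases two j with rfl | rfl <;> rcases two k with rfl | rfl
        · rw [h00 i, Tapp, Tapp, h00 (a+i)]
          exact Prod.ext_iff.mpr ⟨by ring, rfl⟩
        · rw [h01 i, Tapp, Tapp, h01 (a+i)]
          exact Prod.ext_iff.mpr ⟨by ring, rfl⟩
        · rw [h10 i, Tapp, Tapp, h10 (a+i)]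
        · rw [h11 i, Tapp, Tapp, h11 (a+i)]
      · refine Equiv.ext fun x => ?_
        obtain ⟨i, j, k⟩ := x
        rw [Equiv.Perm.mul_apply, Equiv.Perm.mul_apply]
        rcases two j with rfl | rfl <;> rcases two k with rfl | rfl
        · rw [v00 i, Tapp, Tapp, v00 (a+i)]
          exact Prod.ext_iff.mpr ⟨by ring, rfl⟩
        · rw [v01 i, Tapp, Tapp, v01 (a+i)]
        · rw [v10 i, Tapp, Tapp, v10 (a+i)]
          exact Prod.ext_iff.mpr ⟨by ring, rfl⟩
        · rw [v11 i, Tapp, Tapp, v11 (a+i)]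
  rw [hset, ← Set.image_univ, Set.ncard_image_of_injective _ Tinj, Set.ncard_univ]
  simp [Nat.card_eq_fintype_card]
end

section
/- Let α ∈ (0,1) be irrational, with Gauss iterates α_0 := α, α_n := {1/α_{n-1}}, partial quotients a_n := ⌊1/α_{n-1}⌋, and convergent denominators q_n defined by q_{-1}=0, q_0=1, q_n = a_n·q_{n-1} + q_{n-2}. Let w > 1 be a real number and suppose there exists w' > w such that the inequality |α − p/q| < q^{−(w'+1)} holds for infinitely many reduced fractions p/q (p ∈ ℤ, q ≥ 1, gcd(p,q)=1). Then there exist infinitely many n with a_{n+1} ≥ q_n^{w−1}. -/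
/-!
If `|α - p/q| < q^{-(w'+1)}` with `q` large, the error is below `1/(2q²)`, so by Legendre's
theorem `p/q` is a convergent `p_n/q_n`; convergents are reduced (determinant formula), hence
`q = q_n`. The exact error `|α - p_n/q_n| = 1/(q_n (q_n/α_n + q_{n-1}))` exceeds
`1/((a_{n+1} + 2) q_n²)`, so `q_n^{w'-1} < a_{n+1} + 2 ≤ 3 a_{n+1}`, and once `q_n^{w'-w} ≥ 3`
this gives `q_n^{w-1} < a_{n+1}`. The good fractions have unbounded denominators, since their
numerators are at most `2q`, so they produce infinitely many such `n`.
-/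

noncomputable def gaussIter (α : ℝ) : ℕ → ℝ
  | 0 => α
  | n + 1 => Int.fract (1 / gaussIter α n)

noncomputable def partialQuotient (α : ℝ) (n : ℤ) : ℤ :=
  ⌊1 / gaussIter α (n - 1).toNat⌋

open GenContFract (of)

namespace GenContFract

variable {K : Type*} [Field K] [LinearOrder K] [FloorRing K]

theorem exists_int_contsAux_eq (v : K) (n : ℕ) :
    ∃ A B : ℤ, (of v).contsAux n = ⟨A, B⟩ := by
  induction n using Nat.twoStepInduction with
  | zero => exact ⟨1, 0, by simp [contsAux]⟩
  | one => exact ⟨⌊v⌋, 1, by rw [first_contAux_eq_h_one, of_h_eq_floor, Int.cast_one]⟩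
  | more n ih₀ ih₁ =>
    obtain ⟨A₀, B₀, h₀⟩ := ih₀
    obtain ⟨A₁, B₁, h₁⟩ := ih₁
    rcases hs : (of v).s.get? n with _ | gp
    · exact ⟨A₁, B₁, by rw [contsAux_stable_step_of_terminated hs, h₁]⟩
    · obtain ⟨ha, z, hb⟩ := of_partNum_eq_one_and_exists_int_partDen_eq hs
      refine ⟨z * A₁ + A₀, z * B₁ + B₀, ?_⟩
      rw [contsAux_recurrence hs h₀ h₁, ha, hb]
      push_cast
      ring_nf

theorem one_le_dens [IsStrictOrderedRing K] (v : K) (n : ℕ) : 1 ≤ (of v).dens n := by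
  induction n with
  | zero => rw [zeroth_den_eq_one]
  | succ n ih => exact ih.trans of_den_mono

theorem exists_isCoprime_conts_eq [IsStrictOrderedRing K] {v : K} {n : ℕ}
    (hn : ¬(of v).TerminatedAt n) :
    ∃ A B : ℤ, IsCoprime A B ∧ (of v).conts n = ⟨A, B⟩ := by
  obtain ⟨A, B, hAB⟩ := exists_int_contsAux_eq v (n + 1)
  obtain ⟨A', B', hAB'⟩ := exists_int_contsAux_eq v (n + 2)
  have hdet := (SimpContFract.of v).determinant hn
  change (of v).nums n * (of v).dens (n + 1) - (of v).dens n * (of v).nums (n + 1) = _ at hdet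
  simp only [num_eq_conts_a, den_eq_conts_b, nth_cont_eq_succ_nth_contAux, hAB, hAB'] at hdet
  have hdetℤ : A * B' - B * A' = (-1) ^ (n + 1) := by exact_mod_cast hdet
  have hunit : ((-1 : ℤ) ^ (n + 1)) * (-1) ^ (n + 1) = 1 := by rw [← mul_pow]; norm_num
  refine ⟨A, B, ⟨(-1) ^ (n + 1) * B', -((-1) ^ (n + 1) * A'), ?_⟩, hAB⟩
  linear_combination (-1) ^ (n + 1) * hdetℤ + hunit

theorem contsAux_b_le_succ [IsStrictOrderedRing K] (v : K) (n : ℕ) :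
    ((of v).contsAux n).b ≤ ((of v).contsAux (n + 1)).b := by
  cases n with
  | zero => simp [contsAux]
  | succ n => exact of_den_mono

theorem IntFractPair.stream_zero_of_mem_Ico [IsStrictOrderedRing K] {v : K} (h0 : 0 ≤ v)
    (h1 : v < 1) :
    IntFractPair.stream v 0 = some ⟨0, v⟩ := by
  rw [IntFractPair.stream_zero, IntFractPair.of, Int.floor_eq_zero_iff.mpr ⟨h0, h1⟩,
    Int.fract_eq_self.mpr ⟨h0, h1⟩]

end GenContFract

open GenContFract

variable {α : ℝ}

theorem irrational_gaussIter (h : Irrational α) : ∀ n, Irrational (gaussIter α n)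
  | 0 => h
  | n + 1 => by
    rw [gaussIter, Int.fract, one_div]
    exact (irrational_gaussIter h n).inv.sub_intCast _

theorem gaussIter_pos (h : Irrational α) (h0 : 0 < α) : ∀ n, 0 < gaussIter α n
  | 0 => h0
  | n + 1 => (Int.fract_nonneg _).lt_of_ne' (irrational_gaussIter h (n + 1)).ne_zero

theorem gaussIter_lt_one (h1 : α < 1) : ∀ n, gaussIter α n < 1
  | 0 => h1
  | _ + 1 => Int.fract_lt_one _

theorem one_le_floor_one_div_gaussIter (h : Irrational α) (h0 : 0 < α) (h1 : α < 1) (n : ℕ) :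
    1 ≤ ⌊1 / gaussIter α n⌋ := by
  rw [Int.le_floor, Int.cast_one, le_div_iff₀ (gaussIter_pos h h0 n), one_mul]
  exact (gaussIter_lt_one h1 n).le

@[simp]
theorem partialQuotient_natCast_add_one (n : ℕ) :
    partialQuotient α (n + 1) = ⌊1 / gaussIter α n⌋ := by
  simp [partialQuotient]

theorem stream_succ_eq_gaussIter (h : Irrational α) (h0 : 0 ≤ α) (h1 : α < 1) (n : ℕ) :
    IntFractPair.stream α (n + 1) = some ⟨⌊1 / gaussIter α n⌋, gaussIter α (n + 1)⟩ := by
  have step : ∀ {b : ℤ}, IntFractPair.stream α n = some ⟨b, gaussIter α n⟩ →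
      IntFractPair.stream α (n + 1) = some ⟨⌊1 / gaussIter α n⌋, gaussIter α (n + 1)⟩ :=
    fun hn => by
      rw [IntFractPair.stream_succ_of_some hn (irrational_gaussIter h n).ne_zero]
      simp only [IntFractPair.of, gaussIter, one_div]
  cases n with
  | zero => exact step (IntFractPair.stream_zero_of_mem_Ico h0 h1)
  | succ n => exact step (stream_succ_eq_gaussIter h h0 h1 n)

theorem of_s_get?_eq_gaussIter (h : Irrational α) (h0 : 0 ≤ α) (h1 : α < 1) (n : ℕ) :
    (of α).s.get? n = some ⟨1, (⌊1 / gaussIter α n⌋ : ℝ)⟩ :=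
  get?_of_eq_some_of_succ_get?_intFractPair_stream (stream_succ_eq_gaussIter h h0 h1 n)

theorem dens_eq_of_recurrence (h : Irrational α) (h0 : 0 ≤ α) (h1 : α < 1) {q : ℤ → ℤ}
    (hqm1 : q (-1) = 0) (hq0 : q 0 = 1)
    (hq : ∀ n : ℤ, 1 ≤ n → q n = partialQuotient α n * q (n - 1) + q (n - 2)) (n : ℕ) :
    (of α).dens n = q n := by
  induction n using Nat.twoStepInduction with
  | zero => rw [zeroth_den_eq_one, Nat.cast_zero, hq0, Int.cast_one]
  | one =>
    rw [first_den_eq (of_s_get?_eq_gaussIter h h0 h1 0), Nat.cast_one, hq 1 le_rfl]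
    norm_num [partialQuotient, hq0, hqm1, gaussIter]
  | more n ih₀ ih₁ =>
    have hrec := hq (n + 2) (by omega)
    rw [partialQuotient, show ((n : ℤ) + 2 - 1).toNat = n + 1 by omega,
      show (n : ℤ) + 2 - 1 = (n + 1 : ℕ) by push_cast; ring,
      show (n : ℤ) + 2 - 2 = n by ring] at hrec
    rw [dens_recurrence (of_s_get?_eq_gaussIter h h0 h1 (n + 1)) ih₀ ih₁]
    push_cast [hrec]
    ring

theorem one_div_lt_abs_sub_convs (h : Irrational α) (h0 : 0 < α) (h1 : α < 1) (n : ℕ) :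
    1 / ((⌊1 / gaussIter α n⌋ + 2) * (of α).dens n ^ 2) < |α - (of α).convs n| := by
  obtain ⟨b, hstream⟩ : ∃ b, IntFractPair.stream α n = some ⟨b, gaussIter α n⟩ := by
    cases n with
    | zero => exact ⟨0, IntFractPair.stream_zero_of_mem_Ico h0.le h1⟩
    | succ n => exact ⟨_, stream_succ_eq_gaussIter h h0.le h1 n⟩
  have herr := sub_convs_eq hstream
  simp only [if_neg (irrational_gaussIter h n).ne_zero] at herr
  set t := gaussIter α n
  set a : ℝ := ((⌊1 / t⌋ : ℤ) : ℝ)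
  set B := ((of α).contsAux (n + 1)).b
  set B' := ((of α).contsAux n).b
  have hB : (of α).dens n = B := by rw [den_eq_conts_b, nth_cont_eq_succ_nth_contAux]
  have hB1 : 1 ≤ B := hB ▸ one_le_dens α n
  have hB'0 : 0 ≤ B' := zero_le_of_contsAux_b
  have hB'B : B' ≤ B := contsAux_b_le_succ α n
  have ht : 0 < t := gaussIter_pos h h0 n
  have hta : t⁻¹ < a + 1 := by
    rw [← one_div]; exact Int.lt_floor_add_one _
  have hD : 0 < B * (t⁻¹ * B + B') := by positivity
  have hDlt : B * (t⁻¹ * B + B') < (a + 2) * B ^ 2 := calc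
    B * (t⁻¹ * B + B') < B * ((a + 1) * B + B) := by
      have hB0 : 0 < B := by linarith
      exact mul_lt_mul_of_pos_left (add_lt_add_of_lt_of_le (by gcongr) hB'B) hB0
    _ = (a + 2) * B ^ 2 := by ring
  rw [hB, herr, abs_div, abs_pow, abs_neg, abs_one, one_pow, abs_of_pos hD]
  exact one_div_lt_one_div_of_lt hD hDlt

theorem exists_convs_eq_and_dens_eq_of_abs_sub_lt {ξ : ℝ} (hξ : Irrational ξ) {p q : ℤ}
    (hq : 0 < q) (hpq : Int.gcd p q = 1) (h : |ξ - p / q| < 1 / (2 * q ^ 2)) :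
    ∃ n, (of ξ).convs n = p / q ∧ (of ξ).dens n = q := by
  have hden : (((p / q : ℚ)).den : ℤ) = q := Rat.den_div_eq_of_coprime hq hpq
  obtain ⟨n, hn⟩ := Real.exists_convs_eq_rat (q := p / q) (by
    rw [show (((p / q : ℚ)).den : ℝ) = q by exact_mod_cast hden]; push_cast; exact h)
  have hterm : ¬(of ξ).TerminatedAt n := fun ht => by
    obtain ⟨r, hr⟩ := (terminates_iff_rat ξ).mp ⟨n, ht⟩
    exact hξ.ne_rat r hr
  obtain ⟨A, B, hAB, hconts⟩ := exists_isCoprime_conts_eq hterm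
  have hdens : (of ξ).dens n = B := by rw [den_eq_conts_b, hconts]
  have hB : 0 < B := by exact_mod_cast (one_le_dens ξ n).trans_eq hdens
  have hconv : (of ξ).convs n = A / B := by
    rw [conv_eq_num_div_den, num_eq_conts_a, hdens, hconts]
  have hAB' : ((A / B : ℚ) : ℝ) = ((p / q : ℚ) : ℝ) := by rw [← hn, hconv]; push_cast; rfl
  obtain ⟨rfl, rfl⟩ := Rat.div_int_inj hB hq (Int.isCoprime_iff_gcd_eq_one.mp hAB) hpq
    (Rat.cast_injective hAB')
  exact ⟨n, hconv, hdens⟩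

theorem Set.Infinite.exists_lt_snd {S : Set (ℤ × ℤ)} (hS : S.Infinite) {K : ℤ} (hK : 0 ≤ K)
    (hbound : ∀ pq ∈ S, 0 ≤ pq.2 ∧ |pq.1| ≤ K * pq.2) (C : ℤ) :
    ∃ pq ∈ S, C < pq.2 := by
  by_contra! hC
  refine hS ((Set.finite_Icc (-(K * C), 0) (K * C, C)).subset fun pq hpq => ?_)
  obtain ⟨hq, hp⟩ := hbound pq hpq
  have hKq : K * pq.2 ≤ K * C := mul_le_mul_of_nonneg_left (hC pq hpq) hK
  exact ⟨⟨by linarith [neg_abs_le pq.1], hq⟩,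
    ⟨by linarith [le_abs_self pq.1], hC pq hpq⟩⟩

theorem abs_le_two_mul_of_abs_sub_div_lt_one {x : ℝ} (hx : |x| ≤ 1) {p q : ℤ} (hq : 0 < q)
    (h : |x - p / q| < 1) : |p| ≤ 2 * q := by
  have hq' : (0 : ℝ) < q := by exact_mod_cast hq
  have hpq : |(p : ℝ) / q| < 2 := calc
    |(p : ℝ) / q| = |x - (x - p / q)| := by ring_nf
    _ ≤ |x| + |x - p / q| := abs_sub _ _
    _ < 2 := by linarith
  rw [abs_div, abs_of_pos hq', div_lt_iff₀ hq'] at hpq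
  exact_mod_cast hpq.le

theorem rpow_neg_add_one_eq {x : ℝ} (hx : 0 < x) (s : ℝ) :
    x ^ (-(s + 1)) = (x ^ (s - 1) * x ^ 2)⁻¹ := by
  rw [Real.rpow_neg hx.le, ← Real.rpow_two, ← Real.rpow_add hx]
  ring_nf

theorem rpow_neg_add_one_le_one_div {x s : ℝ} (hx : 0 < x) (h2 : 2 ≤ x ^ (s - 1)) :
    x ^ (-(s + 1)) ≤ 1 / (2 * x ^ 2) := by
  rw [rpow_neg_add_one_eq hx, ← one_div]
  gcongr

theorem rpow_sub_one_lt_of_one_div_lt {x a w w' : ℝ} (hx : 0 < x) (ha : 1 ≤ a)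
    (h3 : 3 ≤ x ^ (w' - w)) (h : 1 / ((a + 2) * x ^ 2) < x ^ (-(w' + 1))) :
    x ^ (w - 1) < a := by
  rw [rpow_neg_add_one_eq hx, ← one_div, one_div_lt_one_div (by positivity) (by positivity)] at h
  have h' : x ^ (w' - 1) < a + 2 := lt_of_mul_lt_mul_right h (by positivity)
  have hsplit : x ^ (w' - 1) = x ^ (w' - w) * x ^ (w - 1) := by
    rw [← Real.rpow_add hx]; ring_nf
  nlinarith [Real.rpow_pos_of_pos hx (w - 1)]

theorem exists_dens_eq_and_rpow_lt_floor (h : Irrational α) (h0 : 0 < α) (h1 : α < 1)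
    {w w' : ℝ} {p q : ℤ} (hq : 1 ≤ q) (hpq : Int.gcd p q = 1)
    (h2 : 2 ≤ (q : ℝ) ^ (w' - 1)) (h3 : 3 ≤ (q : ℝ) ^ (w' - w)) (happ : |α - p / q| < (q : ℝ) ^ (-(w' + 1))) :
    ∃ n, (of α).dens n = q ∧ (q : ℝ) ^ (w - 1) < ⌊1 / gaussIter α n⌋ := by
  have hq0 : (0 : ℝ) < q := by exact_mod_cast hq
  obtain ⟨n, hconv, hdens⟩ := exists_convs_eq_and_dens_eq_of_abs_sub_lt h hq hpq
    (happ.trans_le (rpow_neg_add_one_le_one_div hq0 h2))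
  have herr := one_div_lt_abs_sub_convs h h0 h1 n
  rw [hconv, hdens] at herr
  exact ⟨n, hdens, rpow_sub_one_lt_of_one_div_lt hq0
    (by exact_mod_cast one_le_floor_one_div_gaussIter h h0 h1 n) h3 (herr.trans happ)⟩

/-- let `α ∈ (0,1)` be irrational, with partial quotients `a_n` and convergent
denominators `q_{-1}=0, q_0=1, q_n = a_n q_{n-1} + q_{n-2}`.  If `w > 1` and there is
`w' > w` such that `|α - p/q| < q^{-(w'+1)}` for infinitely many reduced fractions `p/q`,
then there are infinitely many `n` with `a_{n+1} ≥ q_n^{w-1}`. -/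
theorem stmt12 (α : ℝ) (hirr : Irrational α) (h0 : 0 < α) (h1 : α < 1)
    (q : ℤ → ℤ) (hqm1 : q (-1) = 0) (hq0 : q 0 = 1)
    (hq : ∀ n : ℤ, 1 ≤ n → q n = partialQuotient α n * q (n - 1) + q (n - 2))
    (w : ℝ) (hw : 1 < w)
    (happrox : ∃ w' : ℝ, w < w' ∧
      {pq : ℤ × ℤ | 1 ≤ pq.2 ∧ Int.gcd pq.1 pq.2 = 1 ∧
        |α - (pq.1 : ℝ) / (pq.2 : ℝ)| < (pq.2 : ℝ) ^ (-(w' + 1) : ℝ)}.Infinite) :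
    {n : ℕ | ((q (n : ℤ) : ℝ)) ^ (w - 1 : ℝ) ≤ (partialQuotient α ((n : ℤ) + 1) : ℝ)}.Infinite := by
  obtain ⟨w', hww', hS⟩ := happrox
  obtain ⟨C, hC⟩ : ∃ C : ℝ, ∀ x ≥ C, 2 ≤ x ^ (w' - 1) ∧ 3 ≤ x ^ (w' - w) :=
    Filter.eventually_atTop.mp <|
      ((tendsto_rpow_atTop (by linarith)).eventually_ge_atTop 2).and
        ((tendsto_rpow_atTop (by linarith)).eventually_ge_atTop 3)
  intro hT
  obtain ⟨M, hM⟩ := (hT.image fun n : ℕ => q n).bddAbove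
  obtain ⟨⟨P, Q⟩, ⟨hQ1, hPQ, happ⟩, hQ⟩ := hS.exists_lt_snd zero_le_two
    (fun pq ⟨hq1, _, happ⟩ => ⟨zero_le_one.trans hq1,
      abs_le_two_mul_of_abs_sub_div_lt_one (abs_le.mpr ⟨by linarith, h1.le⟩) hq1
        (happ.trans_le (Real.rpow_le_one_of_one_le_of_nonpos (by exact_mod_cast hq1)
          (by linarith)))⟩)
    (max ⌈C⌉ M)
  obtain ⟨h2, h3⟩ := hC Q
    ((Int.le_ceil C).trans (by exact_mod_cast (le_max_left _ M).trans hQ.le))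
  obtain ⟨n, hdens, hlt⟩ := exists_dens_eq_and_rpow_lt_floor hirr h0 h1 hQ1 hPQ h2 h3 happ
  have hqn : q n = Q := by
    exact_mod_cast (dens_eq_of_recurrence hirr h0.le h1 hqm1 hq0 hq n).symm.trans hdens
  have hn : (q n : ℝ) ^ (w - 1) ≤ partialQuotient α (n + 1) := by
    rw [hqn, partialQuotient_natCast_add_one]
    exact hlt.le
  have hqM : q n ≤ M := hM ⟨n, hn, rfl⟩
  omega
end
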